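/- arXiv:1711.08409 — 2 statements merged into one kernel-verified Lean document; each statement's English description precedes it below -/
import Mathlib

section
/- If A is a simple pseudo-hoop, then for all x, y ∈ A, y → x = x implies x = 1 or y = 1. -/
universe u v

class PseudoHoop (A : Type u) extends One A, Mul A where
  rimp : A → A → A
  limp : A → A → A
  mul_one' : ∀ x : A, x * 1 = x
  one_mul' : ∀ x : A, 1 * x = x
  rimp_self : ∀ x : A, rimp x x = 1
  limp_self : ∀ x : A, limp x x = 1
  mul_rimp : ∀ x y z : A, rimp (x * y) z = rimp x (rimp y z)
  mul_limp : ∀ x y z : A, limp (x * y) z = limp y (limp x z)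
  div₁ : ∀ x y : A, (rimp x y) * x = (rimp y x) * y
  div₂ : ∀ x y : A, (rimp x y) * x = x * (limp x y)
  div₃ : ∀ x y : A, x * (limp x y) = y * (limp y x)

namespace PseudoHoop

/-- The order on a pseudo-hoop: `x ≤ y` iff `x → y = 1`. -/
def ple {A : Type u} [PseudoHoop A] (x y : A) : Prop := rimp x y = 1

/-- The meet `x ∧ y = (x → y) ⊙ x`. -/
def meet {A : Type u} [PseudoHoop A] (x y : A) : A := (rimp x y) * x

/-- `x ∨₁ y = (x → y) ⇝ y`. -/
def join₁ {A : Type u} [PseudoHoop A] (x y : A) : A := limp (rimp x y) y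

/-- `x ∨₂ y = (x ⇝ y) → y`. -/
def join₂ {A : Type u} [PseudoHoop A] (x y : A) : A := rimp (limp x y) y

/-- Iterated implication: `x →⁰ y = y`, `x →ⁿ⁺¹ y = x → (x →ⁿ y)`. -/
def rimpPow {A : Type u} [PseudoHoop A] (x : A) : ℕ → A → A
  | 0, y => y
  | n + 1, y => rimp x (rimpPow x n y)

/-- A filter of a pseudo-hoop. -/
structure IsFilter {A : Type u} [PseudoHoop A] (F : Set A) : Prop where
  nonempty : F.Nonempty
  mul_mem : ∀ {x y : A}, x ∈ F → y ∈ F → x * y ∈ F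
  upward : ∀ {x y : A}, x ∈ F → ple x y → y ∈ F

/-- A normal filter: `x → y ∈ F` iff `x ⇝ y ∈ F`. -/
def IsNormalFilter {A : Type u} [PseudoHoop A] (F : Set A) : Prop :=
  IsFilter F ∧ ∀ x y : A, rimp x y ∈ F ↔ limp x y ∈ F

def IsProper {A : Type u} [PseudoHoop A] (F : Set A) : Prop := F ≠ Set.univ

/-- A pseudo-hoop is simple if `{1}` is its unique proper filter. -/
def IsSimple (A : Type u) [PseudoHoop A] : Prop :=
  ∀ F : Set A, IsFilter F → IsProper F → F = {1}

/-- A pseudo-hoop is Wajsberg if `x ∨₁ y = y ∨₁ x` and `x ∨₂ y = y ∨₂ x`. -/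
def IsWajsberg (A : Type u) [PseudoHoop A] : Prop :=
  ∀ x y : A, join₁ x y = join₁ y x ∧ join₂ x y = join₂ y x

/-- A fantastic filter. -/
def IsFantasticFilter {A : Type u} [PseudoHoop A] (F : Set A) : Prop :=
  IsFilter F ∧ ∀ x y : A,
    (rimp y x ∈ F → rimp (join₁ x y) x ∈ F) ∧
    (limp y x ∈ F → limp (join₂ x y) x ∈ F)

def IS₂ {A : Type u} [PseudoHoop A] (μ : A → A) : Prop :=
  ∀ x y : A, μ (x * y) = μ x * μ (limp x (x * y)) ∧
    μ (x * y) = μ (rimp y (x * y)) * μ y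

def IS₃ {A : Type u} [PseudoHoop A] (μ : A → A) : Prop :=
  ∀ x y : A, μ (μ x * μ y) = μ x * μ y

def IS₄ {A : Type u} [PseudoHoop A] (μ : A → A) : Prop :=
  ∀ x y : A, μ (rimp (μ x) (μ y)) = rimp (μ x) (μ y) ∧
    μ (limp (μ x) (μ y)) = limp (μ x) (μ y)

/-- Type I state operator. -/
def IsStateI {A : Type u} [PseudoHoop A] (μ : A → A) : Prop :=
  (∀ x y : A, μ (rimp x y) = rimp (μ (join₁ x y)) (μ y) ∧
      μ (limp x y) = limp (μ (join₂ x y)) (μ y)) ∧ IS₂ μ ∧ IS₃ μ ∧ IS₄ μ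

/-- Type II state operator. -/
def IsStateII {A : Type u} [PseudoHoop A] (μ : A → A) : Prop :=
  (∀ x y : A, μ (rimp x y) = rimp (μ (join₁ y x)) (μ y) ∧
      μ (limp x y) = limp (μ (join₂ y x)) (μ y)) ∧ IS₂ μ ∧ IS₃ μ ∧ IS₄ μ

/-- Type III state operator. -/
def IsStateIII {A : Type u} [PseudoHoop A] (μ : A → A) : Prop :=
  (∀ x y : A, μ (rimp x y) = rimp (μ x) (μ (meet x y)) ∧
      μ (limp x y) = limp (μ x) (μ (meet x y))) ∧ IS₂ μ ∧ IS₃ μ ∧ IS₄ μ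

end PseudoHoop

open PseudoHoop

/-- A bounded pseudo-hoop: a pseudo-hoop with a least element `0`. -/
class BoundedPseudoHoop (A : Type u) extends PseudoHoop A, Zero A where
  zero_le : ∀ x : A, rimp 0 x = 1

namespace BoundedPseudoHoop

/-- `x⁻ = x → 0`. -/
def negr {A : Type u} [BoundedPseudoHoop A] (x : A) : A := rimp x 0

/-- `x∼ = x ⇝ 0`. -/
def negl {A : Type u} [BoundedPseudoHoop A] (x : A) : A := limp x 0

/-- A bounded pseudo-hoop is good if `x⁻∼ = x∼⁻` for all `x`. -/
def IsGood (A : Type u) [BoundedPseudoHoop A] : Prop :=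
  ∀ x : A, negl (negr x) = negr (negl x)

/-- A bounded pseudo-hoop is involutive if `x⁻∼ = x∼⁻ = x` for all `x`. -/
def IsInvolutive (A : Type u) [BoundedPseudoHoop A] : Prop :=
  ∀ x : A, negl (negr x) = x ∧ negr (negl x) = x

/-- The set of dense elements. -/
def Den (A : Type u) [BoundedPseudoHoop A] : Set A :=
  {x : A | negl (negr x) = 1}

/-- An involutive filter: `x⁻∼ → x ∈ F` and `x∼⁻ ⇝ x ∈ F` for all `x`. -/
def IsInvolutiveFilter {A : Type u} [BoundedPseudoHoop A] (F : Set A) : Prop :=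
  IsFilter F ∧ ∀ x : A, rimp (negl (negr x)) x ∈ F ∧ limp (negr (negl x)) x ∈ F

end BoundedPseudoHoop

open BoundedPseudoHoop

/-!
If `y ≠ 1`, the filter generated by `y`, namely `{z | y →ⁿ z = 1 for some n}`, contains `y` and so
is not `{1}`; by simplicity it is all of `A`, so `y →ⁿ x = 1` for some `n`. But `y → x = x`
gives `y →ⁿ x = x` for every `n`, hence `x = 1`.
-/

namespace PseudoHoop

variable {A : Type u} [PseudoHoop A]

lemma ple_antisymm {a b : A} (hab : ple a b) (hba : ple b a) : a = b := by
  simpa only [show rimp a b = 1 from hab, show rimp b a = 1 from hba, one_mul'] using div₁ a b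

lemma rimp_mul_eq_of_ple {a b : A} (h : ple a b) : rimp b a * b = a := by
  simpa only [show rimp a b = 1 from h, one_mul'] using (div₁ a b).symm

lemma rimp_mul_ple (a b : A) : ple (rimp a b * a) b := by
  rw [ple, mul_rimp, rimp_self]

lemma ple_rimp_mul (a b : A) : ple a (rimp b (a * b)) := by
  rw [ple, ← mul_rimp, rimp_self]

lemma one_rimp_eq_rimp_one_mul (a : A) : rimp 1 a = rimp a 1 * a := by
  simpa only [mul_one'] using div₁ 1 a

lemma rimp_rimp_one (a b : A) : rimp (rimp a b) 1 = 1 := by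
  have h : rimp 1 (rimp a b) = rimp a b := by rw [← mul_rimp, one_mul']
  rw [← h, one_rimp_eq_rimp_one_mul, mul_rimp, rimp_self]

lemma one_rimp (a : A) : rimp 1 a = a := by
  apply ple_antisymm
  · rw [ple, one_rimp_eq_rimp_one_mul, mul_rimp, rimp_self, rimp_rimp_one]
  · rw [ple, ← mul_rimp, mul_one', rimp_self]

lemma rimp_one (a : A) : rimp a 1 = 1 := by
  simpa only [one_rimp] using rimp_rimp_one 1 a

lemma eq_one_of_one_ple {a : A} (h : ple 1 a) : a = 1 :=
  (one_rimp a).symm.trans h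

lemma mul_limp_one (a : A) : a * limp a 1 = a := by
  simpa only [rimp_one, one_mul'] using (div₂ a 1).symm

lemma limp_one (a : A) : limp a 1 = 1 := by
  calc limp a 1 = limp (a * limp a 1) 1 := by rw [mul_limp_one]
    _ = 1 := by rw [mul_limp, limp_self]

lemma ple_of_limp_eq_one {a b : A} (h : limp a b = 1) : ple a b := by
  have hmul : rimp a b * a = a := by rw [div₂, h, mul_one']
  calc rimp a b = rimp (rimp a b * a) b := by rw [hmul]
    _ = 1 := rimp_mul_ple a b

lemma mul_ple_left (a b : A) : ple (a * b) a :=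
  ple_of_limp_eq_one (by rw [mul_limp, limp_self, limp_one])

lemma ple_trans {a b c : A} (hab : ple a b) (hbc : ple b c) : ple a c := by
  rw [ple, ← rimp_mul_eq_of_ple hab, mul_rimp, show rimp b c = 1 from hbc, rimp_one]

lemma rimp_ple_rimp_right {b c : A} (h : ple b c) (a : A) : ple (rimp a b) (rimp a c) := by
  rw [ple, ← mul_rimp]
  exact ple_trans (rimp_mul_ple a b) h

lemma rimp_ple_rimp_left {a b : A} (h : ple a b) (c : A) : ple (rimp b c) (rimp a c) := by
  rw [ple, ← rimp_mul_eq_of_ple h, mul_rimp (rimp b a), ← mul_rimp]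
  exact mul_ple_left _ _

lemma mul_ple_mul_left {b c : A} (h : ple b c) (a : A) : ple (a * b) (a * c) := by
  rw [ple, mul_rimp]
  exact ple_trans (ple_rimp_mul a c) (rimp_ple_rimp_left h _)

lemma mul_ple_mul_right {a b : A} (h : ple a b) (c : A) : ple (a * c) (b * c) := by
  rw [ple, mul_rimp]
  exact ple_trans h (ple_rimp_mul b c)

lemma mul_ple_mul {a b c d : A} (hab : ple a b) (hcd : ple c d) : ple (a * c) (b * d) :=
  ple_trans (mul_ple_mul_right hab c) (mul_ple_mul_left hcd b)

lemma rimpPow_ple_rimpPow {b c : A} (h : ple b c) (y : A) :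
    ∀ n, ple (rimpPow y n b) (rimpPow y n c)
  | 0 => h
  | n + 1 => rimp_ple_rimp_right (rimpPow_ple_rimpPow h y n) y

lemma rimpPow_rimpPow (y z : A) :
    ∀ m n, rimpPow y m (rimpPow y n z) = rimpPow y (m + n) z
  | 0, n => by rw [Nat.zero_add, rimpPow]
  | m + 1, n => by rw [Nat.add_right_comm, rimpPow, rimpPow, rimpPow_rimpPow y z m n]

lemma rimpPow_eq_self {x y : A} (hyx : rimp y x = x) : ∀ n, rimpPow y n x = x
  | 0 => rfl
  | n + 1 => by rw [rimpPow, rimpPow_eq_self hyx n, hyx]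

/-- Nested to the right: the axioms do not include associativity, and this is the nesting that
`mul_rimp` unfolds into `y →ⁿ z`. -/
def mulPow (y : A) : ℕ → A
  | 0 => 1
  | n + 1 => y * mulPow y n

lemma rimp_mulPow (y z : A) : ∀ n, rimp (mulPow y n) z = rimpPow y n z
  | 0 => one_rimp z
  | n + 1 => by rw [mulPow, mul_rimp, rimp_mulPow y z n, rimpPow]

def principalFilter (y : A) : Set A := {z | ∃ n, rimpPow y n z = 1}

lemma mem_principalFilter_self (y : A) : y ∈ principalFilter y :=
  ⟨1, rimp_self y⟩

lemma isFilter_principalFilter (y : A) : IsFilter (principalFilter y) where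
  nonempty := ⟨y, mem_principalFilter_self y⟩
  mul_mem := by
    rintro a b ⟨m, hm⟩ ⟨n, hn⟩
    have hpow : ple (mulPow y m * mulPow y n) (a * b) :=
      mul_ple_mul ((rimp_mulPow y a m).trans hm) ((rimp_mulPow y b n).trans hn)
    refine ⟨m + n, ?_⟩
    rwa [ple, mul_rimp, rimp_mulPow, rimp_mulPow, rimpPow_rimpPow] at hpow
  upward := by
    rintro a b ⟨n, hn⟩ hab
    exact ⟨n, eq_one_of_one_ple (hn ▸ rimpPow_ple_rimpPow hab y n)⟩

lemma IsSimple.exists_rimpPow_eq_one (hA : IsSimple A) {y : A} (hy : y ≠ 1) (x : A) :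
    ∃ n, rimpPow y n x = 1 := by
  by_contra hx
  have hproper : IsProper (principalFilter y) := fun huniv => hx (Set.eq_univ_iff_forall.1 huniv x)
  have hy_mem := mem_principalFilter_self y
  rw [hA _ (isFilter_principalFilter y) hproper] at hy_mem
  exact hy hy_mem

end PseudoHoop

theorem stmt4 {A : Type u} [PseudoHoop A] (h : IsSimple A) (x y : A)
    (hyx : rimp y x = x) : x = 1 ∨ y = 1 := by
  refine or_iff_not_imp_right.2 fun hy => ?_
  obtain ⟨n, hn⟩ := h.exists_rimpPow_eq_one hy x
  rwa [rimpPow_eq_self hyx] at hn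
end

section
/- A bounded pseudo-hoop A is involutive (x^{-∼} = x^{∼-} = x for all x) if and only if for all x, y ∈ A: x → y = y^- ⇝ x^- and x ⇝ y = y^∼ → x^∼. -/
universe u v

open PseudoHoop

open BoundedPseudoHoop


/-!
Everything rests on residuation, `x ⊙ y ≤ z ↔ x ≤ y → z ↔ y ≤ x ⇝ z`, which together with
associativity gives the exchange law `x → (y ⇝ z) = y ⇝ (x → z)`, i.e. `x → y∼ = y ⇝ x⁻`.
If `A` is involutive, write `y = y⁻∼` (resp. `y∼⁻`) and exchange. Conversely, the identity at
`(x⁻∼, x)` gives `x⁻∼ → x = x⁻ ⇝ x⁻∼⁻ = 1` because `x⁻ ≤ x⁻∼⁻`; together with `x ≤ x⁻∼` this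
forces `x⁻∼ = x`, and symmetrically `x∼⁻ = x`.
-/

namespace PseudoHoop

variable {A : Type u} [PseudoHoop A] {x y z : A}

theorem ple_refl (x : A) : ple x x := rimp_self x

theorem ple_iff_limp_eq_one : ple x y ↔ limp x y = 1 := by
  constructor
  · intro h
    have hx : x * limp x y = x := by rw [← div₂, h, one_mul']
    simpa only [mul_limp, limp_self] using (congrArg (fun t => limp t y) hx).symm
  · intro h
    have hx : rimp x y * x = x := by rw [div₂, h, mul_one']
    rw [ple]
    simpa only [mul_rimp, rimp_self] using (congrArg (fun t => rimp t y) hx).symm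

theorem ple_antisymm_s7 (hxy : ple x y) (hyx : ple y x) : x = y := by
  rw [ple] at hxy hyx
  simpa only [hxy, hyx, one_mul'] using div₁ x y

theorem ple_rimp_iff : ple x (rimp y z) ↔ ple (x * y) z := by
  rw [ple, ple, mul_rimp]

theorem ple_limp_iff : ple y (limp x z) ↔ ple (x * y) z := by
  rw [ple_iff_limp_eq_one, ple_iff_limp_eq_one, mul_limp]

theorem eq_of_forall_ple_iff (h : ∀ w, ple w x ↔ ple w y) : x = y :=
  ple_antisymm_s7 ((h x).mp (ple_refl x)) ((h y).mpr (ple_refl y))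

theorem mul_assoc' (x y z : A) : x * y * z = x * (y * z) := by
  have h : ∀ w : A, rimp (x * y * z) w = rimp (x * (y * z)) w := by
    intro w
    simp only [mul_rimp]
  exact ple_antisymm_s7 (by rw [ple, h]; exact rimp_self _) (by rw [ple, ← h]; exact rimp_self _)

theorem rimp_limp_comm (x y z : A) : rimp x (limp y z) = limp y (rimp x z) :=
  eq_of_forall_ple_iff fun w => by simp only [ple_rimp_iff, ple_limp_iff, mul_assoc']

end PseudoHoop

namespace BoundedPseudoHoop

variable {A : Type u} [BoundedPseudoHoop A]

theorem ple_negl_negr (x : A) : ple x (negl (negr x)) :=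
  ple_limp_iff.mpr (ple_rimp_iff.mp (ple_refl _))

theorem ple_negr_negl (x : A) : ple x (negr (negl x)) :=
  ple_rimp_iff.mpr (ple_limp_iff.mp (ple_refl _))

theorem rimp_negl_eq_limp_negr (x y : A) : rimp x (negl y) = limp y (negr x) :=
  rimp_limp_comm x y 0

end BoundedPseudoHoop

theorem stmt7 {A : Type u} [BoundedPseudoHoop A] :
    IsInvolutive A ↔ ∀ x y : A,
      rimp x y = limp (negr y) (negr x) ∧ limp x y = rimp (negl y) (negl x) := by
  constructor
  · intro hinv x y
    constructor
    · calc rimp x y = rimp x (negl (negr y)) := by rw [(hinv y).1]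
        _ = limp (negr y) (negr x) := rimp_negl_eq_limp_negr x (negr y)
    · calc limp x y = limp x (negr (negl y)) := by rw [(hinv y).2]
        _ = rimp (negl y) (negl x) := (rimp_negl_eq_limp_negr (negl y) x).symm
  · intro h x
    have hrl : ple (negl (negr x)) x :=
      (h _ x).1.trans (ple_iff_limp_eq_one.mp (ple_negr_negl (negr x)))
    have hlr : ple (negr (negl x)) x :=
      ple_iff_limp_eq_one.mpr ((h _ x).2.trans (ple_negl_negr (negl x)))
    exact ⟨ple_antisymm_s7 hrl (ple_negl_negr x), ple_antisymm_s7 hlr (ple_negr_negl x)⟩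
end
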